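/- Joint importance sketch matrix multiplication (expectation bound): Let X ∈ ℂ^{m×n}, Y ∈ ℂ^{m×n'}, ε ∈ (0,1), φ, φ' ≥ 1, and let Σ be an (r, ε, φ, φ')-approximate joint importance sketch of X and Y, i.e., built from r i.i.d. samples from p̃ with ‖p̃ − p‖_TV ≤ ε and p(i) ≥ (1/2)((1/φ)p_{row(X)}(i) + (1/φ')p_{row(Y)}(i)). Then ‖E[X† Σ† Σ Y] − X† Y‖_F ≤ 2ε·√(φφ')·‖X‖_F·‖Y‖_F. -/

import Mathlib

open Finset Matrix

/-- Euclidean norm of row `i` of a matrix. -/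
noncomputable def rowNorm {m n : ℕ} (A : Matrix (Fin m) (Fin n) ℂ) (i : Fin m) : ℝ :=
  Real.sqrt (∑ j, ‖A i j‖ ^ 2)

/-- Frobenius norm of a matrix. -/
noncomputable def frobNorm {m n : ℕ} (A : Matrix (Fin m) (Fin n) ℂ) : ℝ :=
  Real.sqrt (∑ i, ∑ j, ‖A i j‖ ^ 2)

/-- The sketch matrix determined by sampled indices `s` and importance distribution `p`:
row `i` equals `e_{s i}/√(r·p(s i))` when `p (s i) > 0` and is zero otherwise. -/
noncomputable def sketchMatrix {m : ℕ} (r : ℕ) (p : Fin m → ℝ) (s : Fin r → Fin m) :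
    Matrix (Fin r) (Fin m) ℂ :=
  Matrix.of fun i j =>
    if j = s i ∧ 0 < p (s i) then ((1 / Real.sqrt (r * p (s i)) : ℝ) : ℂ) else 0

/-! Because the `r` samples are i.i.d. from `p̃`, the expectation of `X† Σ† Σ Y` is
`∑ᵢ (p̃ᵢ / pᵢ) X(i,·)† Y(i,·)` (Lean's `p̃ᵢ / 0 = 0` matches the zero rows of `Σ`), so the error is
`∑ᵢ (p̃ᵢ / pᵢ - 1) X(i,·)† Y(i,·)`, whose Frobenius norm is at most
`∑ᵢ |p̃ᵢ - pᵢ| ‖X(i,·)‖ ‖Y(i,·)‖ / pᵢ`. AM-GM turns the lower bound on `p` into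
`‖X(i,·)‖ ‖Y(i,·)‖ ≤ √(φφ') ‖X‖_F ‖Y‖_F pᵢ`, and `∑ᵢ |p̃ᵢ - pᵢ| ≤ 2ε`. -/

attribute [local instance] Matrix.frobeniusNormedAddCommGroup Matrix.frobeniusNormedSpace

theorem Fintype.sum_prod_smul_apply {ι α R M : Type*} [Fintype ι] [DecidableEq ι] [Fintype α]
    [CommSemiring R] [AddCommMonoid M] [Module R M] (w : α → R) (hw : ∑ a, w a = 1)
    (F : α → M) (k : ι) :
    ∑ s : ι → α, (∏ i, w (s i)) • F (s k) = ∑ a, w a • F a := by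
  rw [← (Equiv.funSplitAt k α).symm.sum_comp, Fintype.sum_prod_type]
  refine sum_congr _ _ fun a => ?_
  have hsplit (t : {j // j ≠ k} → α) :
      ∏ i, w ((Equiv.funSplitAt k α).symm (a, t) i) = w a * ∏ j, w (t j) := by
    rw [Fintype.prod_eq_mul_prod_subtype_ne _ k]
    simp only [Equiv.funSplitAt_symm_apply, dif_pos]
    exact congrArg _ (prod_congr _ _ fun j => by rw [dif_neg j.2])
  have hrest : ∑ t : {j // j ≠ k} → α, ∏ j, w (t j) = 1 := by
    rw [← Fintype.prod_sum, hw, prod_const_one]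
  simp_rw [hsplit, Equiv.funSplitAt_symm_apply, dif_pos, mul_smul, ← Finset.smul_sum,
    ← Finset.sum_smul, hrest, one_smul]

theorem Fintype.sum_prod_smul_sum_apply {ι α R M : Type*} [Fintype ι] [DecidableEq ι]
    [Fintype α] [CommSemiring R] [AddCommMonoid M] [Module R M] (w : α → R)
    (hw : ∑ a, w a = 1) (F : α → M) :
    ∑ s : ι → α, (∏ i, w (s i)) • ∑ i, F (s i) = Fintype.card ι • ∑ a, w a • F a := by
  simp_rw [Finset.smul_sum]
  rw [Finset.sum_comm]
  simp [sum_prod_smul_apply w hw, Finset.smul_sum]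

theorem Matrix.conjTranspose_mul_eq_sum_vecMulVec {l m n α : Type*} [Fintype m]
    [NonUnitalSemiring α] [StarRing α] (A : Matrix m l α) (B : Matrix m n α) :
    Aᴴ * B = ∑ k, vecMulVec (star (A k)) (B k) := by
  ext a b
  simp [mul_apply, sum_apply, vecMulVec_apply]

theorem mul_le_sqrt_mul_mul_of_half_add_le {a b A B φ φ' t : ℝ} (hφ : 0 < φ) (hφ' : 0 < φ')
    (hA : 0 < A) (hB : 0 < B)
    (h : (1/2) * ((1/φ) * (a ^ 2 / A ^ 2) + (1/φ') * (b ^ 2 / B ^ 2)) ≤ t) :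
    a * b ≤ Real.sqrt (φ * φ') * A * B * t := by
  set x := a / (Real.sqrt φ * A) with hxd
  set y := b / (Real.sqrt φ' * B) with hyd
  have hx : x ^ 2 = (1/φ) * (a ^ 2 / A ^ 2) := by
    simp only [hxd, div_pow, mul_pow, Real.sq_sqrt hφ.le]; ring
  have hy : y ^ 2 = (1/φ') * (b ^ 2 / B ^ 2) := by
    simp only [hyd, div_pow, mul_pow, Real.sq_sqrt hφ'.le]; ring
  have hab : a * b = Real.sqrt (φ * φ') * A * B * (x * y) := by
    have := Real.sqrt_pos.mpr hφ
    have := Real.sqrt_pos.mpr hφ'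
    rw [Real.sqrt_mul hφ.le, hxd, hyd]
    field_simp
  rw [hab]
  gcongr
  nlinarith [two_mul_le_add_sq x y]

theorem abs_div_sub_one_mul_le {q p t K : ℝ} (hK : 0 ≤ K) (ht : 0 ≤ t) (htp : t ≤ K * p) :
    |q / p - 1| * t ≤ K * |q - p| := by
  rcases le_or_gt p 0 with hp | hp
  · have : t = 0 := le_antisymm (htp.trans (mul_nonpos_of_nonneg_of_nonpos hK hp)) ht
    simp only [this, mul_zero]
    positivity
  · rw [div_sub_one hp.ne', abs_div, abs_of_pos hp]
    calc |q - p| / p * t ≤ |q - p| / p * (K * p) := by gcongr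
      _ = K * |q - p| := by field_simp

theorem frobNorm_eq_norm {m n : ℕ} (A : Matrix (Fin m) (Fin n) ℂ) : frobNorm A = ‖A‖ := by
  rw [frobNorm, frobenius_norm_def, Real.sqrt_eq_rpow]
  norm_num

theorem frobNorm_pos {m n : ℕ} {A : Matrix (Fin m) (Fin n) ℂ} (hA : A ≠ 0) : 0 < frobNorm A := by
  rw [frobNorm_eq_norm]
  exact norm_pos_iff.mpr hA

theorem frobNorm_vecMulVec_star {m n n' : ℕ} (X : Matrix (Fin m) (Fin n) ℂ)
    (Y : Matrix (Fin m) (Fin n') ℂ) (j : Fin m) :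
    frobNorm (vecMulVec (star (X j)) (Y j)) = rowNorm X j * rowNorm Y j := by
  rw [frobNorm, rowNorm, rowNorm, ← Real.sqrt_mul (sum_nonneg fun _ _ => by positivity),
    sum_mul_sum]
  simp [vecMulVec_apply, mul_pow]

theorem frobNorm_sum_smul_vecMulVec_le {m n n' : ℕ} (X : Matrix (Fin m) (Fin n) ℂ)
    (Y : Matrix (Fin m) (Fin n') ℂ) (c : Fin m → ℝ) :
    frobNorm (∑ j, (c j : ℂ) • vecMulVec (star (X j)) (Y j))
      ≤ ∑ j, |c j| * (rowNorm X j * rowNorm Y j) := by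
  rw [frobNorm_eq_norm]
  refine (norm_sum_le _ _).trans_eq (Fintype.sum_congr _ _ fun j => ?_)
  rw [norm_smul, Complex.norm_real, Real.norm_eq_abs, ← frobNorm_eq_norm, frobNorm_vecMulVec_star]

theorem sketchMatrix_mul_apply {m r : ℕ} {n : Type*} (p : Fin m → ℝ) (s : Fin r → Fin m)
    (Y : Matrix (Fin m) n ℂ) (k : Fin r) :
    (sketchMatrix r p s * Y) k = ((1 / Real.sqrt (r * p (s k)) : ℝ) : ℂ) • Y (s k) := by
  ext b
  by_cases h : 0 < p (s k)
  · simp [mul_apply, sketchMatrix, h]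
  · have : Real.sqrt (r * p (s k)) = 0 :=
      Real.sqrt_eq_zero'.mpr (mul_nonpos_of_nonneg_of_nonpos (by positivity) (not_lt.mp h))
    simp [mul_apply, sketchMatrix, h, this]

theorem sketched_product_eq_sum {m r : ℕ} {n n' : Type*} {p : Fin m → ℝ}
    (hp : ∀ j, 0 ≤ p j) (s : Fin r → Fin m) (X : Matrix (Fin m) n ℂ) (Y : Matrix (Fin m) n' ℂ) :
    Xᴴ * (sketchMatrix r p s)ᴴ * (sketchMatrix r p s * Y)
      = ∑ k, (((r * p (s k))⁻¹ : ℝ) : ℂ) • vecMulVec (star (X (s k))) (Y (s k)) := by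
  rw [← conjTranspose_mul, conjTranspose_mul_eq_sum_vecMulVec]
  refine Fintype.sum_congr _ _ fun k => ?_
  rw [sketchMatrix_mul_apply, sketchMatrix_mul_apply, star_smul, smul_vecMulVec, vecMulVec_smul,
    smul_smul, Complex.star_def, Complex.conj_ofReal, ← Complex.ofReal_mul, div_mul_div_comm,
    one_mul, Real.mul_self_sqrt (by have := hp (s k); positivity), one_div]

theorem expected_sketched_product {m r : ℕ} {n n' : Type*} (hr : r ≠ 0) {p ptilde : Fin m → ℝ}
    (hp : ∀ j, 0 ≤ p j) (hpt : ∑ j, ptilde j = 1) (X : Matrix (Fin m) n ℂ)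
    (Y : Matrix (Fin m) n' ℂ) :
    ∑ s : Fin r → Fin m, ((∏ i, ptilde (s i) : ℝ) : ℂ) •
        (Xᴴ * (sketchMatrix r p s)ᴴ * (sketchMatrix r p s * Y))
      = ∑ j, ((ptilde j / p j : ℝ) : ℂ) • vecMulVec (star (X j)) (Y j) := by
  simp_rw [sketched_product_eq_sum hp, Complex.ofReal_prod]
  rw [Fintype.sum_prod_smul_sum_apply (fun j => (ptilde j : ℂ)) (by exact_mod_cast hpt)
      fun j => (((r * p j)⁻¹ : ℝ) : ℂ) • vecMulVec (star (X j)) (Y j),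
    Fintype.card_fin, Finset.smul_sum]
  refine Fintype.sum_congr _ _ fun j => ?_
  rw [← Nat.cast_smul_eq_nsmul ℂ, smul_smul, smul_smul]
  congr 1
  push_cast
  rw [mul_inv]
  field_simp

theorem joint_sketch_matrix_mult_expectation_general
    (m n n' r : ℕ) (hr : 1 ≤ r)
    (X : Matrix (Fin m) (Fin n) ℂ) (Y : Matrix (Fin m) (Fin n') ℂ)
    (hX : X ≠ 0) (hY : Y ≠ 0)
    (ε : ℝ) (φ φ' : ℝ) (hφ : 1 ≤ φ) (hφ' : 1 ≤ φ')
    (p ptilde : Fin m → ℝ)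
    (hp_nonneg : ∀ i, 0 ≤ p i)
    (hpt_sum : ∑ i, ptilde i = 1)
    (hp_over : ∀ i, (1/2) * ((1/φ) * (rowNorm X i ^ 2 / frobNorm X ^ 2)
            + (1/φ') * (rowNorm Y i ^ 2 / frobNorm Y ^ 2)) ≤ p i)
    (hTV : (1/2) * ∑ i, |ptilde i - p i| ≤ ε) :
    frobNorm
      ((∑ s : Fin r → Fin m, ((∏ i, ptilde (s i) : ℝ) : ℂ) •
          (Xᴴ * (sketchMatrix r p s)ᴴ * (sketchMatrix r p s * Y)))
        - Xᴴ * Y)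
      ≤ 2 * ε * Real.sqrt (φ * φ') * frobNorm X * frobNorm Y := by
  have hA := frobNorm_pos hX
  have hB := frobNorm_pos hY
  set K := Real.sqrt (φ * φ') * frobNorm X * frobNorm Y
  have hK : 0 ≤ K := by positivity
  have hrow (j : Fin m) : rowNorm X j * rowNorm Y j ≤ K * p j :=
    mul_le_sqrt_mul_mul_of_half_add_le (by linarith) (by linarith) hA hB (hp_over j)
  have hdiff : ∑ j, ((ptilde j / p j : ℝ) : ℂ) • vecMulVec (star (X j)) (Y j) - Xᴴ * Y
      = ∑ j, ((ptilde j / p j - 1 : ℝ) : ℂ) • vecMulVec (star (X j)) (Y j) := by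
    simp [conjTranspose_mul_eq_sum_vecMulVec, ← sum_sub_distrib, sub_smul]
  rw [expected_sketched_product (by omega) hp_nonneg hpt_sum, hdiff]
  calc _ ≤ ∑ j, |ptilde j / p j - 1| * (rowNorm X j * rowNorm Y j) :=
        frobNorm_sum_smul_vecMulVec_le X Y _
    _ ≤ ∑ j, K * |ptilde j - p j| :=
        sum_le_sum fun j _ => abs_div_sub_one_mul_le hK
          (mul_nonneg (Real.sqrt_nonneg _) (Real.sqrt_nonneg _)) (hrow j)
    _ ≤ K * (2 * ε) := by rw [← mul_sum]; gcongr; linarith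
    _ = 2 * ε * Real.sqrt (φ * φ') * frobNorm X * frobNorm Y := by ring

/-- **Joint importance sketch matrix multiplication: expectation bound.**
Let `Σ` be an `(r,ε,φ,φ')`-approximate joint importance sketch of `X` and `Y`, i.e., built
from `r` i.i.d. samples from `p̃` with `‖p̃−p‖_TV ≤ ε` and
`p(i) ≥ (1/2)((1/φ)p_{row(X)}(i) + (1/φ')p_{row(Y)}(i))`.  Then
`‖E[X† Σ† Σ Y] − X† Y‖_F ≤ 2ε·√(φφ')·‖X‖_F·‖Y‖_F`. -/
theorem joint_sketch_matrix_mult_expectation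
    (m n n' r : ℕ) (hr : 1 ≤ r)
    (X : Matrix (Fin m) (Fin n) ℂ) (Y : Matrix (Fin m) (Fin n') ℂ)
    (hX : X ≠ 0) (hY : Y ≠ 0)
    (ε : ℝ) (hε : ε ∈ Set.Ioo (0:ℝ) 1) (φ φ' : ℝ) (hφ : 1 ≤ φ) (hφ' : 1 ≤ φ')
    (p ptilde : Fin m → ℝ)
    (hp_nonneg : ∀ i, 0 ≤ p i) (hp_sum : ∑ i, p i = 1)
    (hpt_nonneg : ∀ i, 0 ≤ ptilde i) (hpt_sum : ∑ i, ptilde i = 1)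
    (hp_over : ∀ i, (1/2) * ((1/φ) * (rowNorm X i ^ 2 / frobNorm X ^ 2)
            + (1/φ') * (rowNorm Y i ^ 2 / frobNorm Y ^ 2)) ≤ p i)
    (hTV : (1/2) * ∑ i, |ptilde i - p i| ≤ ε) :
    frobNorm
      ((∑ s : Fin r → Fin m, ((∏ i, ptilde (s i) : ℝ) : ℂ) •
          (Xᴴ * (sketchMatrix r p s)ᴴ * (sketchMatrix r p s * Y)))
        - Xᴴ * Y)
      ≤ 2 * ε * Real.sqrt (φ * φ') * frobNorm X * frobNorm Y :=
  joint_sketch_matrix_mult_expectation_general m n n' r hr X Y hX hY ε φ φ' hφ hφ' p ptilde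
    hp_nonneg hpt_sum hp_over hTV
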